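/- arXiv:0811.3546 — 3 statements merged into one kernel-verified Lean document; each statement's English description precedes it below -/
import Mathlib

section
/- Let k, n ≥ 1 be integers with k, n ≢ 2 (mod 4). Then ℤ[ζₖ] ⊆ ℤ[ζₙ] (as subrings of ℂ) if and only if k divides n. -/
/-!
The easy direction is `ζₖ = ζₙ ^ (n / k)`. Conversely, if `ζₖ ∈ ℤ[ζₙ] ⊆ ℚ(ζₙ)`, then
`ℚ(ζₙ)` contains a primitive `lcm(k, n)`-th root of unity, so
`φ(lcm(k, n)) ≤ [ℚ(ζₙ) : ℚ] = φ(n)`. A multiple `n * r` of `n` with `φ(n * r) ≤ φ(n)` has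
`r = 1`, or `r = 2` and `n` odd; in the second case `k ∣ 2n` with `n` odd, and
`k ≢ 2 (mod 4)` forces `k` to be odd, so again `k ∣ n`.
-/

open Complex Polynomial
open scoped Nat

namespace Nat

theorem eq_one_or_eq_two_and_odd_of_totient_mul_le {n r : ℕ} (hn : n ≠ 0) (hr : r ≠ 0)
    (h : φ (n * r) ≤ φ n) : r = 1 ∨ r = 2 ∧ Odd n := by
  set g := n.gcd r
  have hg : 0 < g := Nat.gcd_pos_of_pos_left r (Nat.pos_of_ne_zero hn)
  have hφn : 0 < φ n := totient_pos.2 (Nat.pos_of_ne_zero hn)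
  have hφr : 0 < φ r := totient_pos.2 (Nat.pos_of_ne_zero hr)
  -- `φ g * φ (n * r) = φ n * φ r * g` squeezes `g ≤ φ r * g ≤ φ g ≤ g`.
  have hbound : φ r * g ≤ φ g := by
    refine Nat.le_of_mul_le_mul_left ?_ hφn
    calc φ n * (φ r * g) = φ g * φ (n * r) := by rw [totient_gcd_mul_totient_mul]; ring
      _ ≤ φ g * φ n := Nat.mul_le_mul_left _ h
      _ = φ n * φ g := mul_comm _ _
  have hφg : φ g ≤ g := totient_le g
  have hr1 : φ r = 1 := by nlinarith
  have hg1 : g = 1 := by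
    by_contra hne
    have := totient_lt g (by omega)
    nlinarith
  rcases totient_eq_one_iff.1 hr1 with rfl | rfl
  · exact .inl rfl
  · exact .inr ⟨rfl, coprime_two_right.1 hg1⟩

theorem dvd_of_dvd_two_mul_of_odd {k n : ℕ} (hk4 : k % 4 ≠ 2) (hn : Odd n) (h : k ∣ 2 * n) :
    k ∣ n := by
  rcases Nat.even_or_odd k with hk | hk
  · have h4 : 4 ∣ 2 * n := (show 4 ∣ k by rcases hk with ⟨j, rfl⟩; omega).trans h
    rcases hn with ⟨j, rfl⟩
    omega
  · exact (coprime_two_right.2 hk).dvd_of_dvd_mul_left h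

end Nat

theorem IsPrimitiveRoot.dvd_of_isCyclotomicExtension_of_mod_four_ne_two {n k : ℕ} [NeZero n]
    {L : Type*} [CommRing L] [IsDomain L] [Algebra ℚ L] [IsCyclotomicExtension {n} ℚ L] {x : L}
    (hx : IsPrimitiveRoot x k) (hk : k ≠ 0) (hk4 : k % 4 ≠ 2) : k ∣ n := by
  have := IsCyclotomicExtension.finiteDimensional {n} ℚ L
  have hn : 0 < n := NeZero.pos n
  have hlcm : φ (k.lcm n) ≤ φ n := by
    have := hx.lcm_totient_le_finrank (IsCyclotomicExtension.zeta_spec n ℚ L)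
      (cyclotomic.irreducible_rat (Nat.lcm_pos (Nat.pos_of_ne_zero hk) hn))
    rwa [IsCyclotomicExtension.finrank L (cyclotomic.irreducible_rat hn)] at this
  obtain ⟨r, hr⟩ := Nat.dvd_lcm_right k n
  have hr0 : r ≠ 0 := by rintro rfl; simp [Nat.lcm_eq_zero_iff, hk, hn.ne'] at hr
  rw [hr] at hlcm
  have hkr : k ∣ n * r := hr ▸ Nat.dvd_lcm_left k n
  rcases Nat.eq_one_or_eq_two_and_odd_of_totient_mul_le hn.ne' hr0 hlcm with rfl | ⟨rfl, hodd⟩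
  · simpa using hkr
  · exact Nat.dvd_of_dvd_two_mul_of_odd hk4 hodd (mul_comm n 2 ▸ hkr)

namespace Complex

theorem exp_two_pi_I_div_mul_pow (k : ℕ) {c : ℕ} (hc : c ≠ 0) :
    exp (2 * Real.pi * I / (k * c : ℕ)) ^ c = exp (2 * Real.pi * I / k) := by
  rw [← exp_nat_mul, Nat.cast_mul, ← div_div, mul_div_cancel₀ _ (Nat.cast_ne_zero.2 hc)]

theorem adjoin_exp_le_of_dvd {k n : ℕ} (hn : n ≠ 0) (h : k ∣ n) :
    Algebra.adjoin ℤ ({exp (2 * Real.pi * I / k)} : Set ℂ)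
      ≤ Algebra.adjoin ℤ ({exp (2 * Real.pi * I / n)} : Set ℂ) := by
  obtain ⟨c, rfl⟩ := h
  refine Algebra.adjoin_singleton_le ?_
  rw [← exp_two_pi_I_div_mul_pow k (right_ne_zero_of_mul hn)]
  exact Subalgebra.pow_mem _ (Algebra.self_mem_adjoin_singleton ℤ _) c

theorem dvd_of_adjoin_exp_le {k n : ℕ} (hk : k ≠ 0) (hn : n ≠ 0) (hk4 : k % 4 ≠ 2)
    (h : Algebra.adjoin ℤ ({exp (2 * Real.pi * I / k)} : Set ℂ)
      ≤ Algebra.adjoin ℤ ({exp (2 * Real.pi * I / n)} : Set ℂ)) : k ∣ n := by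
  have : NeZero n := ⟨hn⟩
  let L := Algebra.adjoin ℚ ({exp (2 * Real.pi * I / n)} : Set ℂ)
  have : IsCyclotomicExtension {n} ℚ L :=
    (isPrimitiveRoot_exp n hn).adjoin_isCyclotomicExtension ℚ
  have hζL : exp (2 * Real.pi * I / k) ∈ L :=
    Algebra.adjoin_singleton_le (S := L.restrictScalars ℤ)
      (Algebra.self_mem_adjoin_singleton ℚ _) (h (Algebra.self_mem_adjoin_singleton ℤ _))
  have hζ : IsPrimitiveRoot (⟨_, hζL⟩ : L) k :=
    IsPrimitiveRoot.coe_submonoidClass_iff.1 (isPrimitiveRoot_exp k hk)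
  exact hζ.dvd_of_isCyclotomicExtension_of_mod_four_ne_two hk hk4

end Complex

theorem stmt_10_general (k n : ℕ) (hk : 1 ≤ k) (hn : 1 ≤ n)
    (hk4 : k % 4 ≠ 2) :
    Algebra.adjoin ℤ ({Complex.exp (2 * Real.pi * Complex.I / k)} : Set ℂ)
        ≤ Algebra.adjoin ℤ ({Complex.exp (2 * Real.pi * Complex.I / n)} : Set ℂ)
      ↔ k ∣ n :=
  ⟨dvd_of_adjoin_exp_le (by omega) (by omega) hk4, adjoin_exp_le_of_dvd (by omega)⟩

/-- For `k, n ≥ 1` with `k, n ≢ 2 (mod 4)`, `ℤ[ζₖ] ⊆ ℤ[ζₙ]` (as subrings of `ℂ`)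
iff `k ∣ n`. -/
theorem stmt_10 (k n : ℕ) (hk : 1 ≤ k) (hn : 1 ≤ n)
    (hk4 : k % 4 ≠ 2) (hn4 : n % 4 ≠ 2) :
    Algebra.adjoin ℤ ({Complex.exp (2 * Real.pi * Complex.I / k)} : Set ℂ)
        ≤ Algebra.adjoin ℤ ({Complex.exp (2 * Real.pi * Complex.I / n)} : Set ℂ)
      ↔ k ∣ n :=
  stmt_10_general k n hk hn hk4
end

section
/- For a prime p ≥ 5 and an odd integer k ≥ 3, φ(k) = 2p if and only if k = 2p+1 and 2p+1 is prime. -/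
/-- For a prime `p ≥ 5` and odd `k ≥ 3`, `φ(k) = 2p` iff `2p+1` is prime and `k = 2p+1`. -/
theorem stmt_13 (p k : ℕ) (hp : p.Prime) (hp5 : 5 ≤ p) (hk : 3 ≤ k) (hkodd : Odd k) :
    Nat.totient k = 2 * p ↔ Nat.Prime (2 * p + 1) ∧ k = 2 * p + 1 := by
  constructor
  · intro h
    have hk0 : k ≠ 0 := by omega
    obtain ⟨q, hq, hqd⟩ := Nat.exists_prime_and_dvd (show k ≠ 1 by omega)
    have hq2 : q ≠ 2 := by
      rintro rfl
      exact (Nat.not_even_iff_odd.mpr hkodd) ((even_iff_two_dvd).mpr hqd)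
    have hq3 : 3 ≤ q := by
      have := hq.two_le; omega
    set e := k.factorization q with he
    have he1 : 1 ≤ e := (Nat.Prime.factorization_pos_of_dvd hq hk0 hqd)
    have hcop : Nat.Coprime (q ^ e) (k / q ^ e) :=
      Nat.Coprime.pow_left _ (Nat.coprime_ordCompl hq hk0)
    have hmul : q ^ e * (k / q ^ e) = k := Nat.ordProj_mul_ordCompl_eq_self k q
    set b := k / q ^ e with hb
    have hbodd : Odd b := by
      rcases Nat.even_or_odd b with hbe | hbo
      · exfalso
        apply Nat.not_even_iff_odd.mpr hkodd
        rw [← hmul]; exact hbe.mul_left _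
      · exact hbo
    have hb0 : b ≠ 0 := by
      intro h0; rw [h0, mul_zero] at hmul; omega
    have htot : Nat.totient (q ^ e) * Nat.totient b = 2 * p := by
      rw [← Nat.totient_mul hcop, hmul, h]
    by_cases hb1 : b = 1
    · -- k = q ^ e
      have hkq : k = q ^ e := by rw [← hmul, hb1, mul_one]
      rw [hb1, Nat.totient_one, mul_one, Nat.totient_prime_pow hq (by omega)] at htot
      rcases Nat.lt_or_ge e 2 with he2 | he2
      · -- e = 1
        have he1' : e = 1 := by omega
        rw [he1'] at htot hkq
        simp at htot hkq
        have hqval : q = 2 * p + 1 := by omega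
        subst hqval
        exact ⟨hq, hkq⟩
      · -- e ≥ 2 : contradiction
        exfalso
        have hqdvd : q ∣ 2 * p := by
          rw [← htot]
          exact Dvd.dvd.mul_right (dvd_pow_self q (by omega)) _
        have hqp : q = p := by
          rcases (Nat.Prime.dvd_mul hq).mp hqdvd with h2 | hpp
          · exact absurd (Nat.prime_dvd_prime_iff_eq hq Nat.prime_two |>.mp h2) hq2
          · exact (Nat.prime_dvd_prime_iff_eq hq hp).mp hpp
        subst hqp
        have hle : q ≤ q ^ (e - 1) := Nat.le_self_pow (by omega) q
        have h1 : q * 4 ≤ q ^ (e - 1) * (q - 1) := Nat.mul_le_mul hle (by omega)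
        omega
    · -- b ≥ 3, and q ^ e ≥ 3: both totients even, contradiction
      exfalso
      have hb3 : 3 ≤ b := by
        obtain ⟨m, hm⟩ := hbodd
        omega
      have hq3' : 3 ≤ q ^ e := le_trans hq3 (Nat.le_self_pow (by omega) q)
      obtain ⟨a1, ha1⟩ := Nat.totient_even (show 2 < q ^ e by omega)
      obtain ⟨a2, ha2⟩ := Nat.totient_even (show 2 < b by omega)
      rw [ha1, ha2] at htot
      have h4 : 4 * (a1 * a2) = 2 * p := by rw [← htot]; ring
      have hdvd : (2 : ℕ) ∣ p := ⟨a1 * a2, by omega⟩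
      rcases hp.eq_one_or_self_of_dvd 2 hdvd with h' | h' <;> omega
  · rintro ⟨hprime, rfl⟩
    rw [Nat.totient_prime hprime]
    omega
end

section
/- Let p ≥ 5 be a Sophie Germain prime (so q = 2p+1 is prime), let n = q, and let m ≥ 8 be even. Then ℚ(ζ_{m/2} + ζ_{m/2}⁻¹) ⊆ ℚ(ζₙ + ζₙ⁻¹) if and only if m ∈ {8, 12, 2n, 4n}. -/
/-!
Write `ζₖ` for a primitive `k`-th root of unity. Since `ζₖ` is a root of
`X² - (ζₖ + ζₖ⁻¹) X + 1` and is not real, `[ℚ(ζₖ) : ℚ(ζₖ + ζₖ⁻¹)] = 2`, so `ℚ(ζₖ + ζₖ⁻¹)` has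
degree `φ(k) / 2`. If it lies in `ℚ(ζₙ + ζₙ⁻¹)`, of prime degree `p`, then `φ(k) = 2` or `2p`.
Both are squarefree, so `(ℤ/k)ˣ` is an abelian group of squarefree order, hence cyclic, and
`k` is `4`, `qᵉ` or `2qᵉ` with `q` an odd prime; solving `qᵉ⁻¹ (q - 1) = 2` or `2p` leaves
`k ∈ {3, 4, 6}` or `k ∈ {n, 2n}`. Conversely `ζ₄ + ζ₄⁻¹` and `ζ₆ + ζ₆⁻¹` are rational, and for
`k ∈ {n, 2n}` some power `ζₙʲ` equals `±ζₖ`, so `ζₖ + ζₖ⁻¹ = ±(ζₙʲ + ζₙ⁻ʲ)` is a polynomial in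
`ζₙ + ζₙ⁻¹` (a Dickson polynomial).
-/

open Complex IntermediateField Polynomial Module ComplexConjugate
open scoped Nat

namespace Nat

theorem isCyclic_units_zmod_of_squarefree_totient {k : ℕ} (h : Squarefree (φ k)) :
    IsCyclic (ZMod k)ˣ := by
  rcases eq_or_ne k 0 with rfl | hk
  · exact ZMod.isCyclic_units_zero
  have : NeZero k := ⟨hk⟩
  have : IsZGroup (ZMod k)ˣ :=
    IsZGroup.of_squarefree (by rwa [Nat.card_eq_fintype_card, ZMod.card_units_eq_totient])
  exact IsCyclic.of_exponent_eq_card (IsZGroup.exponent_eq_card _)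

theorem totient_odd_prime_pow {q e : ℕ} (hq : q.Prime) (hodd : Odd q) (he : 1 ≤ e) :
    φ (q ^ e) = 2 * (q ^ (e - 1) * ((q - 1) / 2)) := by
  obtain ⟨r, rfl⟩ := hodd
  rw [totient_prime_pow hq he, show (2 * r + 1 - 1) / 2 = r by omega, add_tsub_cancel_right]
  ring

theorem totient_eq_two_mul_of_squarefree {k c : ℕ} (h : φ k = 2 * c) (hc : Squarefree (2 * c)) :
    k = 4 ∨ ∃ q e, q.Prime ∧ Odd q ∧ 1 ≤ e ∧ q ^ (e - 1) * ((q - 1) / 2) = c ∧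
      (k = q ^ e ∨ k = 2 * q ^ e) := by
  rcases (ZMod.isCyclic_units_iff k).1 (isCyclic_units_zmod_of_squarefree_totient (h ▸ hc)) with
    rfl | rfl | rfl | rfl | ⟨q, e, hq, hodd, he, hk⟩
  · obtain rfl : c = 0 := by rw [totient_zero] at h; omega
    exact absurd hc not_squarefree_zero
  · rw [totient_one] at h; omega
  · rw [totient_two] at h; omega
  · exact Or.inl rfl
  · have hφ : φ k = φ (q ^ e) := by
      rcases hk with rfl | rfl
      exacts [rfl, totient_two_mul_of_odd (hodd.pow)]
    rw [hφ, totient_odd_prime_pow hq hodd he] at h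
    exact Or.inr ⟨q, e, hq, hodd, he, by omega, hk⟩

theorem eq_of_totient_eq_two {k : ℕ} (h : φ k = 2) : k = 3 ∨ k = 4 ∨ k = 6 := by
  rcases totient_eq_two_mul_of_squarefree (c := 1) h squarefree_two with
    rfl | ⟨q, e, hq, hodd, he, hqe, hk⟩
  · simp
  obtain ⟨hpow, hq3⟩ := mul_eq_one.1 hqe
  obtain rfl : e = 1 := by have := (Nat.pow_eq_one.1 hpow).resolve_left hq.ne_one; omega
  obtain rfl : q = 3 := by obtain ⟨r, rfl⟩ := hodd; omega
  omega

theorem eq_of_totient_eq_two_mul_prime {k p : ℕ} (hp : p.Prime) (hp5 : 5 ≤ p)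
    (h : φ k = 2 * p) : k = 2 * p + 1 ∨ k = 2 * (2 * p + 1) := by
  have hsq : Squarefree (2 * p) := squarefree_mul_iff.2
    ⟨(coprime_primes prime_two hp).2 (by omega), squarefree_two, hp.prime.squarefree⟩
  rcases totient_eq_two_mul_of_squarefree h hsq with rfl | ⟨q, e, hq, hodd, he, hqe, hk⟩
  · have : φ 4 = 2 := rfl
    omega
  rcases prime_mul_iff.1 (hqe ▸ hp) with ⟨hpow, hq3⟩ | ⟨-, hpow⟩
  · obtain rfl : q = 3 := by obtain ⟨r, rfl⟩ := hodd; omega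
    obtain ⟨h3, -⟩ := hpow.pow_eq_iff.1 rfl
    rw [← h3] at hqe
    omega
  · obtain rfl : e = 1 := by have := (Nat.pow_eq_one.1 hpow).resolve_left hq.ne_one; omega
    obtain ⟨r, rfl⟩ := hodd
    simp only [Nat.sub_self, pow_zero, one_mul, pow_one] at hqe hk
    omega

end Nat

namespace IntermediateField

variable {F E : Type*} [Field F] [Field E] [Algebra F E]

theorem pow_add_inv_pow_mem_adjoin_add_inv {x : E} (hx : x ≠ 0) (j : ℕ) :
    x ^ j + x⁻¹ ^ j ∈ F⟮x + x⁻¹⟯ := by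
  rw [← dickson_one_one_eval_add_inv x x⁻¹ (mul_inv_cancel₀ hx),
    ← map_one (algebraMap F E), ← map_dickson, eval_map_algebraMap]
  exact algebra_adjoin_le_adjoin F _ (aeval_mem_adjoin_singleton F _)

theorem add_inv_mem_adjoin_add_inv_of_pow_eq_one {n : ℕ} {η x : E} (hη : IsPrimitiveRoot η n)
    (hn : n ≠ 0) (hx : x ^ n = 1) : x + x⁻¹ ∈ F⟮η + η⁻¹⟯ := by
  have : NeZero n := ⟨hn⟩
  obtain ⟨j, -, rfl⟩ := hη.eq_pow_of_pow_eq_one hx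
  rw [← inv_pow]
  exact pow_add_inv_pow_mem_adjoin_add_inv (hη.ne_zero hn) j

theorem add_inv_mem_adjoin_add_inv_of_pow_eq_neg_one {n : ℕ} {η x : E}
    (hη : IsPrimitiveRoot η n) (hn : Odd n) (hx : x ^ n = -1) : x + x⁻¹ ∈ F⟮η + η⁻¹⟯ := by
  have h := add_inv_mem_adjoin_add_inv_of_pow_eq_one (F := F) hη hn.pos.ne'
    (x := -x) (by rw [hn.neg_pow, hx, neg_neg])
  rw [inv_neg, ← neg_add] at h
  simpa using neg_mem h

theorem adjoin_add_inv_le_adjoin (x : E) : F⟮x + x⁻¹⟯ ≤ F⟮x⟯ :=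
  adjoin_simple_le_iff.2 <|
    add_mem (mem_adjoin_simple_self F x) (inv_mem (mem_adjoin_simple_self F x))

theorem relfinrank_adjoin_add_inv {x : E} (hx : IsIntegral F x) (hx' : x ∉ F⟮x + x⁻¹⟯) :
    relfinrank F⟮x + x⁻¹⟯ F⟮x⟯ = 2 := by
  rw [relfinrank_eq_finrank_of_le (adjoin_add_inv_le_adjoin x), extendScalars_adjoin,
    adjoin.finrank hx.tower_top]
  have hx0 : x ≠ 0 := by
    rintro rfl
    exact hx' (by simp)
  set t := AdjoinSimple.gen F (x + x⁻¹)
  have hroot : aeval x (X ^ 2 - C t * X + 1) = 0 := by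
    simp only [map_add, map_sub, map_mul, map_pow, aeval_X, aeval_C, map_one, t,
      AdjoinSimple.algebraMap_gen]
    field_simp
    ring
  have hdeg : (X ^ 2 - C t * X + 1).natDegree = 2 := by compute_degree!
  have hle := natDegree_le_of_dvd (minpoly.dvd _ x hroot)
    (ne_zero_of_natDegree_gt (n := 0) (by omega))
  have hne : (minpoly F⟮x + x⁻¹⟯ x).natDegree ≠ 1 := by
    rw [Ne, minpoly.natDegree_eq_one_iff]
    rintro ⟨y, hy⟩
    have hy' : algebraMap _ E y ∈ F⟮x + x⁻¹⟯ := y.prop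
    rw [hy] at hy'
    exact hx' hy'
  have hpos := minpoly.natDegree_pos hx.tower_top (A := F⟮x + x⁻¹⟯)
  omega

end IntermediateField

theorem IsPrimitiveRoot.conj_eq_inv {ζ : ℂ} {k : ℕ} (hζ : IsPrimitiveRoot ζ k) (hk : k ≠ 0) :
    conj ζ = ζ⁻¹ := by
  rw [inv_def, normSq_eq_norm_sq, hζ.norm'_eq_one hk]
  simp

theorem conj_eq_self_of_mem_adjoin_simple {t x : ℂ} (ht : conj t = t) (hx : x ∈ ℚ⟮t⟯) :
    conj x = x := by
  induction hx using adjoin_induction with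
  | mem y hy => rwa [Set.mem_singleton_iff.1 hy]
  | algebraMap y => simp
  | add x y _ _ hx hy => rw [map_add, hx, hy]
  | inv x _ hx => rw [map_inv₀, hx]
  | mul x y _ _ hx hy => rw [map_mul, hx, hy]

theorem IsPrimitiveRoot.notMem_adjoin_add_inv {ζ : ℂ} {k : ℕ} (hζ : IsPrimitiveRoot ζ k)
    (hk : 3 ≤ k) : ζ ∉ ℚ⟮ζ + ζ⁻¹⟯ := by
  intro hmem
  have hconj := hζ.conj_eq_inv (by omega)
  have hfix := conj_eq_self_of_mem_adjoin_simple
    (by rw [map_add, map_inv₀, hconj, inv_inv, add_comm]) hmem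
  refine hζ.pow_ne_one_of_pos_of_lt two_ne_zero (by omega) ?_
  rw [sq]
  nth_rw 1 [← hfix, hconj]
  exact inv_mul_cancel₀ (hζ.ne_zero (by omega))

theorem IsPrimitiveRoot.two_mul_finrank_adjoin_add_inv {ζ : ℂ} {k : ℕ}
    (hζ : IsPrimitiveRoot ζ k) (hk : 3 ≤ k) : 2 * finrank ℚ ℚ⟮ζ + ζ⁻¹⟯ = φ k := by
  have hint : IsIntegral ℚ ζ := (hζ.isIntegral (by omega)).tower_top
  rw [mul_comm, ← relfinrank_adjoin_add_inv hint (hζ.notMem_adjoin_add_inv hk),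
    finrank_bot_mul_relfinrank (adjoin_add_inv_le_adjoin ζ), adjoin.finrank hint,
    ← cyclotomic_eq_minpoly_rat hζ (by omega), natDegree_cyclotomic]

theorem IsPrimitiveRoot.adjoin_add_inv_le_iff {p k : ℕ} (hp : p.Prime) (hp5 : 5 ≤ p)
    (hq : (2 * p + 1).Prime) (hk : 4 ≤ k) {ζ η : ℂ} (hζ : IsPrimitiveRoot ζ k)
    (hη : IsPrimitiveRoot η (2 * p + 1)) :
    ℚ⟮ζ + ζ⁻¹⟯ ≤ ℚ⟮η + η⁻¹⟯ ↔ k = 4 ∨ k = 6 ∨ k = 2 * p + 1 ∨ k = 2 * (2 * p + 1) := by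
  have hdegη : finrank ℚ ℚ⟮η + η⁻¹⟯ = p := by
    have := hη.two_mul_finrank_adjoin_add_inv (by omega)
    rw [Nat.totient_prime hq] at this
    omega
  have hdegζ := hζ.two_mul_finrank_adjoin_add_inv (by omega)
  have hbot (h : φ k = 2) : ℚ⟮ζ + ζ⁻¹⟯ = ⊥ := finrank_eq_one_iff.1 (by omega)
  constructor
  · intro hle
    rcases hp.eq_one_or_self_of_dvd _ (hdegη ▸ finrank_dvd_of_le_right hle) with h | h
    · have := Nat.eq_of_totient_eq_two (k := k) (by omega)
      omega
    · have := Nat.eq_of_totient_eq_two_mul_prime hp hp5 (k := k) (by omega)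
      omega
  · rintro (rfl | rfl | rfl | rfl)
    · exact (hbot rfl).trans_le bot_le
    · exact (hbot rfl).trans_le bot_le
    · exact adjoin_simple_le_iff.2
        (add_inv_mem_adjoin_add_inv_of_pow_eq_one hη (by omega) hζ.pow_eq_one)
    · exact adjoin_simple_le_iff.2 (add_inv_mem_adjoin_add_inv_of_pow_eq_neg_one hη
        (odd_two_mul_add_one p) (hζ.pow (by omega) (mul_comm _ _)).eq_neg_one_of_two_right)

/-- For a Sophie Germain prime `p ≥ 5` (so `q = 2p+1` is prime), `n = 2p+1`, and even `m ≥ 8`: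
`ℚ(ζ_{m/2} + ζ_{m/2}⁻¹) ⊆ ℚ(ζₙ + ζₙ⁻¹)` iff `m ∈ {8, 12, 2n, 4n}`. -/
theorem stmt_15 (p : ℕ) (hp : p.Prime) (hp5 : 5 ≤ p) (hSG : Nat.Prime (2 * p + 1))
    (n : ℕ) (hn : n = 2 * p + 1) (m : ℕ) (hm : 8 ≤ m) (hmeven : Even m) :
    let ζm : ℂ := Complex.exp (2 * Real.pi * Complex.I / (m / 2 : ℕ))
    let ζn : ℂ := Complex.exp (2 * Real.pi * Complex.I / n)
    (ℚ⟮ζm + ζm⁻¹⟯ : IntermediateField ℚ ℂ) ≤ ℚ⟮ζn + ζn⁻¹⟯ ↔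
      m = 8 ∨ m = 12 ∨ m = 2 * n ∨ m = 4 * n := by
  intro ζm ζn
  subst hn
  obtain ⟨k, rfl⟩ := hmeven
  have hζm : IsPrimitiveRoot ζm ((k + k) / 2) := isPrimitiveRoot_exp _ (by omega)
  have hζn : IsPrimitiveRoot ζn (2 * p + 1) := isPrimitiveRoot_exp _ (by omega)
  rw [show (k + k) / 2 = k by omega] at hζm
  rw [hζm.adjoin_add_inv_le_iff hp hp5 hSG (by omega) hζn]
  omega
end
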